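/- arXiv:2311.11189 — 2 statements merged into one kernel-verified Lean document; each statement's English description precedes it below -/
import Mathlib

section
/- Reverse matrix Hölder inequality: for α ∈ [1/2, 1), β = (α−1)/α ∈ [−1, 0), positive semidefinite matrices A and positive definite τ with Tr τ = 1, one has Tr(τ^β A) ≥ (Tr A^α)^{1/α}, with equality attainable by an appropriate choice of τ. -/
open Matrix
open scoped Kronecker ComplexOrder

noncomputable section

/-- Functional calculus applied to a Hermitian matrix (junk value `0` otherwise). -/
noncomputable def hermCFC {n : Type*} [Fintype n] [DecidableEq n]
    (A : Matrix n n ℂ) (f : ℝ → ℝ) : Matrix n n ℂ :=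
  if h : A.IsHermitian then h.cfc f else 0

noncomputable def mlog {n : Type*} [Fintype n] [DecidableEq n]
    (A : Matrix n n ℂ) : Matrix n n ℂ := hermCFC A Real.log

noncomputable def mpow {n : Type*} [Fintype n] [DecidableEq n]
    (A : Matrix n n ℂ) (α : ℝ) : Matrix n n ℂ := hermCFC A (fun x => x ^ α)

noncomputable def mexp {n : Type*} [Fintype n] [DecidableEq n]
    (A : Matrix n n ℂ) : Matrix n n ℂ := hermCFC A Real.exp

/-- A density matrix. -/
def IsDensity {n : Type*} [Fintype n] [DecidableEq n] (ρ : Matrix n n ℂ) : Prop :=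
  ρ.PosSemidef ∧ ρ.trace = 1

/-- An incoherent (diagonal) density matrix. -/
def IsIncoherent {n : Type*} [Fintype n] [DecidableEq n] (σ : Matrix n n ℂ) : Prop :=
  IsDensity σ ∧ ∀ i j, i ≠ j → σ i j = 0

/-- Quantum relative entropy `D(σ‖ρ) = Tr σ (log σ - log ρ)`. -/
noncomputable def qRelEntropy {n : Type*} [Fintype n] [DecidableEq n]
    (σ ρ : Matrix n n ℂ) : ℝ := ((σ * (mlog σ - mlog ρ)).trace).re

/-- `Tr ((ρ^{(1-α)/(2α)} σ ρ^{(1-α)/(2α)})^α)`. -/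
noncomputable def sandwichTr {n : Type*} [Fintype n] [DecidableEq n]
    (σ ρ : Matrix n n ℂ) (α : ℝ) : ℝ :=
  ((mpow (mpow ρ ((1 - α)/(2*α)) * σ * mpow ρ ((1 - α)/(2*α))) α).trace).re

/-- Sandwiched Rényi relative entropy of order `α`. -/
noncomputable def renyiRel {n : Type*} [Fintype n] [DecidableEq n]
    (σ ρ : Matrix n n ℂ) (α : ℝ) : ℝ := (α - 1)⁻¹ * Real.log (sandwichTr σ ρ α)

/-- Separable states on a bipartite system. -/
def SepState {A B : Type*} [Fintype A] [Fintype B] [DecidableEq A] [DecidableEq B]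
    (σ : Matrix (A × B) (A × B) ℂ) : Prop :=
  ∃ (k : ℕ) (p : Fin k → ℝ) (ρA : Fin k → Matrix A A ℂ) (ρB : Fin k → Matrix B B ℂ),
    (∀ i, 0 ≤ p i) ∧ (∑ i, p i = 1) ∧ (∀ i, IsDensity (ρA i)) ∧ (∀ i, IsDensity (ρB i)) ∧
    σ = ∑ i, (p i : ℂ) • (ρA i ⊗ₖ ρB i)


/-- `t(ρ) = Tr exp((log ρ)^diag)`. -/
noncomputable def tVal {n : Type*} [Fintype n] [DecidableEq n] (ρ : Matrix n n ℂ) : ℝ :=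
  ∑ i, Real.exp ((mlog ρ i i).re)

/-- The incoherent state `I_c(ρ) = exp((log ρ)^diag) / t(ρ)`. -/
noncomputable def Ic {n : Type*} [Fintype n] [DecidableEq n] (ρ : Matrix n n ℂ) :
    Matrix n n ℂ :=
  Matrix.diagonal (fun i => ((Real.exp ((mlog ρ i i).re) / tVal ρ : ℝ) : ℂ))

open scoped Classical in
/-- Extended-real-valued quantum relative entropy, `⊤` when `supp σ ⊄ supp ρ`. -/
noncomputable def qRelEntropyE {n : Type*} [Fintype n] [DecidableEq n]
    (σ ρ : Matrix n n ℂ) : EReal :=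
  if ∀ v : n → ℂ, ρ *ᵥ v = 0 → σ *ᵥ v = 0 then ((qRelEntropy σ ρ : ℝ) : EReal) else ⊤

/-- `n`-fold tensor power of a matrix. -/
noncomputable def tpow {d : ℕ} (ρ : Matrix (Fin d) (Fin d) ℂ) (n : ℕ) :
    Matrix (Fin n → Fin d) (Fin n → Fin d) ℂ :=
  Matrix.of fun x y => ∏ i, ρ (x i) (y i)

/-- The recursively constructed real δ-net `D_{n,k+1,R}` on the sphere `S_{k+1} ⊂ ℝ^{k+2}`. -/
noncomputable def netR (n : ℕ) : (k : ℕ) → Set (Fin (k + 2) → ℝ)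
  | 0 => {v | ∃ j : Fin n, v = ![Real.cos (2 * Real.pi * (j : ℕ) / n),
            Real.sin (2 * Real.pi * (j : ℕ) / n)]}
  | (k + 1) => {v | ∃ j : Fin n, ∃ w ∈ netR n k,
      v = Fin.snoc (fun i => Real.cos (2 * Real.pi * (j : ℕ) / n) * w i)
            (Real.sin (2 * Real.pi * (j : ℕ) / n))}

/-- Pairing real coordinates into complex ones: `x ∈ ℝ^{2m+3} ↦ (x₀, x₁+x₂i, …) ∈ ℂ^{m+2}`. -/
noncomputable def toC (m : ℕ) (x : Fin (2 * m + 3) → ℝ) : Fin (m + 2) → ℂ :=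
  fun j => if (j : ℕ) = 0 then ((x ⟨0, by omega⟩ : ℝ) : ℂ)
    else ((x ⟨2 * (j : ℕ) - 1, by have := j.isLt; omega⟩ : ℝ) : ℂ) +
      ((x ⟨2 * (j : ℕ), by have := j.isLt; omega⟩ : ℝ) : ℂ) * Complex.I

/-- The complex δ-net `D_{n,m+2} ⊂ ℂ^{m+2}`. -/
noncomputable def netC (n m : ℕ) : Set (Fin (m + 2) → ℂ) := toC m '' netR n (2 * m + 1)

section Helpers

open Finset

variable {d : ℕ}

lemma real_ineq {d : ℕ} (α : ℝ) (hα0 : 0 < α) (hα1 : α < 1) (β : ℝ) (hβ : β = (α - 1) / α)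
    (t a : Fin d → ℝ) (P : Fin d → Fin d → ℝ) (ht : ∀ i, 0 < t i) (ha : ∀ j, 0 ≤ a j)
    (hP : ∀ i j, 0 ≤ P i j) (hProw : ∀ i, ∑ j, P i j = 1) (hPcol : ∀ j, ∑ i, P i j = 1)
    (htsum : ∑ i, t i = 1) :
    (∑ j, a j ^ α) ^ α⁻¹ ≤ ∑ i, t i ^ β * ∑ j, a j * P i j := by
  have hαne : α ≠ 0 := ne_of_gt hα0
  set T : ℝ := ∑ j, a j ^ α with hT
  have hT0 : 0 ≤ T := Finset.sum_nonneg fun j _ => Real.rpow_nonneg (ha j) α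
  rcases eq_or_lt_of_le hT0 with h0 | hTpos
  · have haz : ∀ j, a j = 0 := by
      intro j
      have hz : a j ^ α = 0 :=
        Finset.sum_eq_zero_iff_of_nonneg
          (fun j _ => Real.rpow_nonneg (ha j) α) |>.mp h0.symm j (mem_univ j)
      exact (Real.rpow_eq_zero (ha j) hαne).mp hz
    have hz2 : ∑ i, t i ^ β * ∑ j, a j * P i j = 0 := by
      apply Finset.sum_eq_zero; intro i _
      have : ∑ j, a j * P i j = 0 := by
        apply Finset.sum_eq_zero; intro j _; rw [haz j, zero_mul]
      rw [this, mul_zero]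
    rw [hz2, ← h0, Real.zero_rpow (by positivity)]
  · have key : ∀ i j,
        a j ^ α * T ^ ((1 - α)/α) * P i j ≤
          (α * (t i ^ β * a j) + (1 - α) * (T ^ α⁻¹ * t i)) * P i j := by
      intro i j
      apply mul_le_mul_of_nonneg_right _ (hP i j)
      have hgm : (t i ^ β * a j) ^ α * (T ^ α⁻¹ * t i) ^ (1 - α)
          ≤ α * (t i ^ β * a j) + (1 - α) * (T ^ α⁻¹ * t i) :=
        Real.geom_mean_le_arith_mean2_weighted hα0.le (by linarith)
          (mul_nonneg (Real.rpow_nonneg (ht i).le β) (ha j))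
          (mul_nonneg (Real.rpow_nonneg hTpos.le α⁻¹) (ht i).le) (by ring)
      have e1 : (t i ^ β) ^ α = t i ^ (β * α) := (Real.rpow_mul (ht i).le β α).symm
      have e2 : (T ^ α⁻¹) ^ (1 - α) = T ^ (α⁻¹ * (1 - α)) := (Real.rpow_mul hTpos.le _ _).symm
      have e3 : α⁻¹ * (1 - α) = (1 - α)/α := by field_simp
      have e4 : β * α = α - 1 := by rw [hβ]; field_simp
      have e5 : t i ^ (α - 1) * t i ^ (1 - α) = 1 := by
        rw [← Real.rpow_add (ht i), show (α - 1) + (1 - α) = 0 from by ring, Real.rpow_zero]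
      have heq : a j ^ α * T ^ ((1 - α)/α)
          = (t i ^ β * a j) ^ α * (T ^ α⁻¹ * t i) ^ (1 - α) := by
        rw [Real.mul_rpow (Real.rpow_nonneg (ht i).le β) (ha j),
            Real.mul_rpow (Real.rpow_nonneg hTpos.le α⁻¹) (ht i).le, e1, e2, e3, e4]
        calc a j ^ α * T ^ ((1 - α)/α)
            = a j ^ α * T ^ ((1 - α)/α) * (t i ^ (α - 1) * t i ^ (1 - α)) := by
              rw [e5, mul_one]
          _ = t i ^ (α - 1) * a j ^ α * (T ^ ((1 - α)/α) * t i ^ (1 - α)) := by ring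
      exact le_trans (le_of_eq heq) hgm
    have hsum := Finset.sum_le_sum (fun i (_ : i ∈ univ) =>
      Finset.sum_le_sum (fun j (_ : j ∈ univ) => key i j))
    have lhs_eq : ∑ i, ∑ j, a j ^ α * T ^ ((1 - α)/α) * P i j = T ^ ((1 - α)/α) * T := by
      rw [Finset.sum_comm]
      calc ∑ j, ∑ i, a j ^ α * T ^ ((1 - α)/α) * P i j
          = ∑ j, a j ^ α * T ^ ((1 - α)/α) * ∑ i, P i j := by
            refine Finset.sum_congr rfl fun j _ => ?_; rw [Finset.mul_sum]
        _ = ∑ j, a j ^ α * T ^ ((1 - α)/α) := by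
            refine Finset.sum_congr rfl fun j _ => ?_; rw [hPcol j, mul_one]
        _ = T ^ ((1 - α)/α) * T := by rw [← Finset.sum_mul, hT]; ring
    have rhs_eq : ∑ i, ∑ j, (α * (t i ^ β * a j) + (1 - α) * (T ^ α⁻¹ * t i)) * P i j
        = α * (∑ i, t i ^ β * ∑ j, a j * P i j) + (1 - α) * T ^ α⁻¹ := by
      have hrow : ∀ i, ∑ j, (α * (t i ^ β * a j) + (1 - α) * (T ^ α⁻¹ * t i)) * P i j
          = α * (t i ^ β * ∑ j, a j * P i j) + (1 - α) * (T ^ α⁻¹ * t i) := by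
        intro i
        simp only [add_mul]
        rw [Finset.sum_add_distrib, ← Finset.mul_sum, hProw i, mul_one]
        congr 1
        rw [Finset.mul_sum, Finset.mul_sum]
        exact Finset.sum_congr rfl fun j _ => by ring
      rw [Finset.sum_congr rfl fun i _ => hrow i, Finset.sum_add_distrib, ← Finset.mul_sum,
          ← Finset.mul_sum, ← Finset.mul_sum, htsum, mul_one]
    rw [lhs_eq, rhs_eq] at hsum
    have hTT : T ^ ((1 - α)/α) * T = T ^ α⁻¹ := by
      nth_rewrite 2 [show T = T ^ (1:ℝ) from (Real.rpow_one T).symm]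
      rw [← Real.rpow_add hTpos]
      congr 1; field_simp; ring
    rw [hTT] at hsum
    exact le_of_mul_le_mul_left (by linarith) hα0


lemma myConjPow (U D : Matrix (Fin d) (Fin d) ℂ) (hU : star U * U = 1) (hU' : U * star U = 1)
    (k : ℕ) : (U * D * star U) ^ k = U * D ^ k * star U := by
  induction k with
  | zero => simp [pow_zero, hU']
  | succ n ih =>
      rw [pow_succ, ih, pow_succ]
      calc U * D ^ n * star U * (U * D * star U)
          = U * D ^ n * ((star U * U) * (D * star U)) := by
            simp only [mul_assoc]
        _ = U * (D ^ n * D) * star U := by rw [hU, one_mul]; simp only [mul_assoc]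
        _ = _ := rfl


lemma conj_aeval (U : Matrix (Fin d) (Fin d) ℂ) (s : Fin d → ℝ)
    (hU : star U * U = 1) (hU' : U * star U = 1) (p : Polynomial ℝ) :
    Polynomial.aeval (U * diagonal (fun i => (s i : ℂ)) * star U) p
      = U * diagonal (fun i => ((p.eval (s i) : ℝ) : ℂ)) * star U := by
  induction p using Polynomial.induction_on' with
  | add p q hp hq =>
      have hd : diagonal (fun i => ((Polynomial.eval (s i) (p + q) : ℝ) : ℂ))
          = diagonal (fun i => ((Polynomial.eval (s i) p : ℝ) : ℂ))
            + diagonal (fun i => ((Polynomial.eval (s i) q : ℝ) : ℂ)) := by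
        have hf : (fun i => ((Polynomial.eval (s i) (p + q) : ℝ) : ℂ))
            = fun i => ((Polynomial.eval (s i) p : ℝ) : ℂ)
              + ((Polynomial.eval (s i) q : ℝ) : ℂ) := by funext i; simp
        rw [hf, diagonal_add]
      rw [map_add, hp, hq, hd, mul_add, add_mul]
  | monomial k c =>
      rw [Polynomial.aeval_monomial, myConjPow _ _ hU hU', diagonal_pow,
          show ((fun i => (s i : ℂ)) ^ k) = (fun i => ((s i : ℂ)) ^ k) from
            funext fun i => Pi.pow_apply _ _ i]
      have hd : diagonal (fun i => ((Polynomial.eval (s i) (Polynomial.monomial k c) : ℝ) : ℂ))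
          = (c : ℂ) • diagonal (fun i => ((s i : ℂ)) ^ k) := by
        have hf2 : (fun i => ((Polynomial.eval (s i) (Polynomial.monomial k c) : ℝ) : ℂ))
            = (c : ℂ) • (fun i => ((s i : ℂ)) ^ k) := by
          funext i; simp [Polynomial.eval_monomial]
        rw [hf2, diagonal_smul]
      rw [hd, Algebra.algebraMap_eq_smul_one, smul_mul_assoc, one_mul,
          mul_smul_comm, smul_mul_assoc]
      simp [← Complex.coe_algebraMap, algebraMap_smul]


lemma cfc_of_decomp {X : Matrix (Fin d) (Fin d) ℂ} (hX : X.IsHermitian)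
    (U : Matrix (Fin d) (Fin d) ℂ) (s : Fin d → ℝ)
    (hU : star U * U = 1) (hU' : U * star U = 1)
    (hdec : X = U * diagonal (fun i => (s i : ℂ)) * star U) (f : ℝ → ℝ) :
    hX.cfc f = U * diagonal (fun i => ((f (s i) : ℝ) : ℂ)) * star U := by
  classical
  set U₀ : Matrix (Fin d) (Fin d) ℂ := (hX.eigenvectorUnitary : Matrix (Fin d) (Fin d) ℂ)
    with hU₀def
  have hU₀mem := hX.eigenvectorUnitary.2
  have hU₀ : star U₀ * U₀ = 1 := Unitary.star_mul_self_of_mem hU₀mem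
  have hU₀' : U₀ * star U₀ = 1 := Unitary.mul_star_self_of_mem hU₀mem
  set E : Finset ℝ := Finset.univ.image hX.eigenvalues ∪ Finset.univ.image s with hE
  set p : Polynomial ℝ := Lagrange.interpolate E id f with hpdef
  have hp : ∀ y ∈ E, p.eval y = f y := by
    intro y hy
    have := Lagrange.eval_interpolate_at_node (s := E) (v := id) (r := f) (i := y)
      (Set.injOn_id _) hy
    simpa [hpdef] using this
  have hcfun : (RCLike.ofReal ∘ f ∘ hX.eigenvalues : Fin d → ℂ)
      = (RCLike.ofReal ∘ (fun x => p.eval x) ∘ hX.eigenvalues : Fin d → ℂ) := by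
    funext i
    simp only [Function.comp_apply]
    rw [hp (hX.eigenvalues i) (Finset.mem_union_left _ (Finset.mem_image_of_mem _ (mem_univ i)))]
  have hXdec : X = U₀ * diagonal (fun i => ((hX.eigenvalues i : ℝ) : ℂ)) * star U₀ :=
    hX.spectral_theorem
  have haev := conj_aeval U₀ hX.eigenvalues hU₀ hU₀' p
  rw [← hXdec] at haev
  have h2 : hX.cfc f = Polynomial.aeval X p := by
    unfold Matrix.IsHermitian.cfc
    rw [hcfun]
    exact haev.symm
  have h3 : Polynomial.aeval X p = U * diagonal (fun i => ((p.eval (s i) : ℝ) : ℂ)) * star U := by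
    rw [hdec]; exact conj_aeval U s hU hU' p
  rw [h2, h3]
  have hfun2 : (fun i => ((p.eval (s i) : ℝ) : ℂ)) = fun i => ((f (s i) : ℝ) : ℂ) := by
    funext i
    rw [hp (s i) (Finset.mem_union_right _ (Finset.mem_image_of_mem _ (mem_univ i)))]
  rw [hfun2]


lemma trace_conj_diag_mul (U B : Matrix (Fin d) (Fin d) ℂ) (v : Fin d → ℂ) :
    (U * diagonal v * star U * B).trace = ∑ i, v i * (star U * B * U) i i := by
  have e : U * diagonal v * star U * B = (U * diagonal v) * (star U * B) := by
    simp only [mul_assoc]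
  rw [e, trace_mul_comm]
  have e2 : (star U * B) * (U * diagonal v) = (star U * B * U) * diagonal v := by
    simp only [mul_assoc]
  rw [e2]
  simp only [Matrix.trace, Matrix.diag_apply, Matrix.mul_diagonal]
  exact Finset.sum_congr rfl fun i _ => mul_comm _ _


lemma trace_conj_diag (U : Matrix (Fin d) (Fin d) ℂ) (v : Fin d → ℂ)
    (hU : star U * U = 1) : (U * diagonal v * star U).trace = ∑ i, v i := by
  rw [trace_mul_cycle, hU, one_mul, trace_diagonal]

lemma conj_unconj (V D : Matrix (Fin d) (Fin d) ℂ) (hV : star V * V = 1) :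
    star V * (V * D * star V) * V = D := by
  calc star V * (V * D * star V) * V = (star V * V) * D * (star V * V) := by
        simp only [mul_assoc]
    _ = D := by rw [hV, one_mul, mul_one]

lemma col_normSq_sum (W : Matrix (Fin d) (Fin d) ℂ) (hW : star W * W = 1) (i : Fin d) :
    ∑ j, Complex.normSq (W j i) = 1 := by
  have h := congrFun (congrFun hW i) i
  rw [Matrix.mul_apply] at h
  simp only [Matrix.star_apply, Matrix.one_apply_eq] at h
  have h2 : ((∑ j, Complex.normSq (W j i) : ℝ) : ℂ) = 1 := by
    push_cast
    rw [← h]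
    exact Finset.sum_congr rfl fun j _ => Complex.normSq_eq_conj_mul_self
  exact_mod_cast h2

lemma row_normSq_sum (W : Matrix (Fin d) (Fin d) ℂ) (hW : W * star W = 1) (i : Fin d) :
    ∑ j, Complex.normSq (W i j) = 1 := by
  have h := col_normSq_sum (star W) (by rwa [star_star]) i
  simpa [Matrix.star_apply, Complex.normSq_conj] using h

lemma mpow_eq {X : Matrix (Fin d) (Fin d) ℂ} (hX : X.IsHermitian) (r : ℝ) :
    mpow X r = hX.cfc (fun x => x ^ r) := by
  unfold mpow hermCFC
  rw [dif_pos hX]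

end Helpers

/-- Reverse matrix Hölder inequality: for `α ∈ [1/2,1)`, `β = (α−1)/α`,
`A ⪰ 0` and `τ ≻ 0` with `Tr τ = 1`, `Tr(τ^β A) ≥ (Tr A^α)^{1/α}`, with equality attainable. -/
theorem stmt6 {d : ℕ} (hd : 0 < d) (α : ℝ) (hα : α ∈ Set.Ico (1/2 : ℝ) 1)
    (β : ℝ) (hβ : β = (α - 1) / α)
    (A : Matrix (Fin d) (Fin d) ℂ) (hA : A.PosSemidef) :
    (∀ τ : Matrix (Fin d) (Fin d) ℂ, τ.PosDef → τ.trace = 1 →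
      ((mpow A α).trace.re) ^ α⁻¹ ≤ ((mpow τ β * A).trace).re) ∧
    (∃ τ : Matrix (Fin d) (Fin d) ℂ, τ.PosSemidef ∧ τ.trace = 1 ∧
      ((mpow τ β * A).trace).re = ((mpow A α).trace.re) ^ α⁻¹) := by
  classical
  obtain ⟨hα12, hα1⟩ := hα
  have hα0 : 0 < α := lt_of_lt_of_le (by norm_num) hα12
  have hαne : α ≠ 0 := ne_of_gt hα0
  have hβneg : β < 0 := by rw [hβ]; exact div_neg_of_neg_of_pos (by linarith) hα0
  have hβne : β ≠ 0 := ne_of_lt hβneg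
  have hAh : A.IsHermitian := hA.1
  set V : Matrix (Fin d) (Fin d) ℂ := (hAh.eigenvectorUnitary : Matrix (Fin d) (Fin d) ℂ)
    with hVdef
  have hV : star V * V = 1 := Unitary.star_mul_self_of_mem hAh.eigenvectorUnitary.2
  have hV' : V * star V = 1 := Unitary.mul_star_self_of_mem hAh.eigenvectorUnitary.2
  set aa : Fin d → ℝ := hAh.eigenvalues with haadef
  have ha : ∀ j, 0 ≤ aa j := hA.eigenvalues_nonneg
  have hAdec : A = V * diagonal (fun j => ((aa j : ℝ) : ℂ)) * star V := hAh.spectral_theorem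
  have hAtr : (mpow A α).trace = ((∑ j, aa j ^ α : ℝ) : ℂ) := by
    rw [mpow_eq hAh, cfc_of_decomp hAh V aa hV hV' hAdec, trace_conj_diag V _ hV]
    push_cast
    rfl
  have hre1 : (mpow A α).trace.re = ∑ j, aa j ^ α := by rw [hAtr, Complex.ofReal_re]
  set T : ℝ := ∑ j, aa j ^ α with hTdef
  constructor
  · -- inequality
    intro τ hτpd hτtr
    have hτh : τ.IsHermitian := hτpd.1
    set U : Matrix (Fin d) (Fin d) ℂ := (hτh.eigenvectorUnitary : Matrix (Fin d) (Fin d) ℂ)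
      with hUdef
    have hU : star U * U = 1 := Unitary.star_mul_self_of_mem hτh.eigenvectorUnitary.2
    have hU' : U * star U = 1 := Unitary.mul_star_self_of_mem hτh.eigenvectorUnitary.2
    set t : Fin d → ℝ := hτh.eigenvalues with htdef
    have ht : ∀ i, 0 < t i := hτpd.eigenvalues_pos
    have hτdec : τ = U * diagonal (fun i => ((t i : ℝ) : ℂ)) * star U := hτh.spectral_theorem
    have htsum : ∑ i, t i = 1 := by
      have h1 : τ.trace = ((∑ i, t i : ℝ) : ℂ) := by
        conv_lhs => rw [hτdec]
        rw [trace_conj_diag U _ hU]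
        push_cast
        rfl
      rw [hτtr] at h1
      exact_mod_cast h1.symm
    set W : Matrix (Fin d) (Fin d) ℂ := star V * U with hWdef
    have hWsW : star W * W = 1 := by
      rw [hWdef, StarMul.star_mul, star_star]
      calc star U * V * (star V * U) = star U * (V * star V) * U := by simp only [mul_assoc]
        _ = 1 := by rw [hV', mul_one, hU]
    have hWWs : W * star W = 1 := by
      rw [hWdef, StarMul.star_mul, star_star]
      calc star V * U * (star U * V) = star V * (U * star U) * V := by simp only [mul_assoc]
        _ = 1 := by rw [hU', mul_one, hV]
    have hMeq : star U * A * U = star W * diagonal (fun j => ((aa j : ℝ) : ℂ)) * W := by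
      rw [hWdef, StarMul.star_mul, star_star]
      conv_lhs => rw [hAdec]
      simp only [mul_assoc]
    have hMii : ∀ i, (star U * A * U) i i
        = ((∑ j, aa j * Complex.normSq (W j i) : ℝ) : ℂ) := by
      intro i
      rw [hMeq, Matrix.mul_apply]
      push_cast
      refine Finset.sum_congr rfl fun x _ => ?_
      rw [Matrix.mul_diagonal, Matrix.star_apply]
      calc star (W x i) * (aa x : ℂ) * W x i
          = (aa x : ℂ) * (star (W x i) * W x i) := by ring
        _ = (aa x : ℂ) * Complex.normSq (W x i) :=
            congrArg _ Complex.normSq_eq_conj_mul_self.symm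
    have htrace2 : (mpow τ β * A).trace
        = ((∑ i, t i ^ β * ∑ j, aa j * Complex.normSq (W j i) : ℝ) : ℂ) := by
      rw [mpow_eq hτh, cfc_of_decomp hτh U t hU hU' hτdec, trace_conj_diag_mul]
      rw [show ((∑ i, t i ^ β * ∑ j, aa j * Complex.normSq (W j i) : ℝ) : ℂ)
          = ∑ i, ((t i ^ β : ℝ) : ℂ) * ((∑ j, aa j * Complex.normSq (W j i) : ℝ) : ℂ) from by
        push_cast; rfl]
      exact Finset.sum_congr rfl fun i _ => by rw [hMii i]
    rw [htrace2, Complex.ofReal_re, hre1]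
    exact real_ineq α hα0 hα1 β hβ t aa (fun i j => Complex.normSq (W j i)) ht ha
      (fun i j => Complex.normSq_nonneg _) (fun i => col_normSq_sum W hWsW i)
      (fun j => row_normSq_sum W hWWs j) htsum
  · -- equality
    have hT0 : 0 ≤ T := Finset.sum_nonneg fun j _ => Real.rpow_nonneg (ha j) α
    rcases eq_or_lt_of_le hT0 with h0 | hTpos
    · -- A = 0
      have haz : ∀ j, aa j = 0 := by
        intro j
        have hz : aa j ^ α = 0 :=
          Finset.sum_eq_zero_iff_of_nonneg
            (fun j _ => Real.rpow_nonneg (ha j) α) |>.mp h0.symm j (Finset.mem_univ j)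
        exact (Real.rpow_eq_zero (ha j) hαne).mp hz
      have hA0 : A = 0 := by
        rw [hAdec, show (fun j => ((aa j : ℝ) : ℂ)) = fun _ => (0 : ℂ) from
          funext fun j => by rw [haz j]; norm_num]
        simp
      refine ⟨diagonal (fun _ => (((d : ℝ)⁻¹ : ℝ) : ℂ)), ?_, ?_, ?_⟩
      · exact posSemidef_diagonal_iff.mpr fun i => by
          rw [Complex.zero_le_real]; positivity
      · rw [trace_diagonal]
        simp only [Finset.sum_const, Finset.card_univ, Fintype.card_fin, nsmul_eq_mul]
        push_cast
        rw [mul_inv_cancel₀]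
        exact_mod_cast hd.ne'
      · rw [hre1, ← h0, Real.zero_rpow (inv_ne_zero hαne), hA0, mul_zero, trace_zero,
          Complex.zero_re]
    · -- T > 0
      have hτpsd : (V * diagonal (fun j => ((T⁻¹ * aa j ^ α : ℝ) : ℂ)) * star V).PosSemidef := by
        rw [Matrix.star_eq_conjTranspose]
        exact (posSemidef_diagonal_iff.mpr fun i => by
          rw [Complex.zero_le_real]
          exact mul_nonneg (inv_nonneg.mpr hT0)
            (Real.rpow_nonneg (ha i) α)).mul_mul_conjTranspose_same V
      have hτh : (V * diagonal (fun j => ((T⁻¹ * aa j ^ α : ℝ) : ℂ)) * star V).IsHermitian :=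
        hτpsd.1
      have hdiagA : star V * A * V = diagonal (fun j => ((aa j : ℝ) : ℂ)) := by
        conv_lhs => rw [hAdec]
        exact conj_unconj V _ hV
      have hterm : ∀ j, (T⁻¹ * aa j ^ α) ^ β * aa j = T ^ (-β) * aa j ^ α := by
        intro j
        rcases eq_or_lt_of_le (ha j) with hz | hpos
        · rw [← hz]
          simp [Real.zero_rpow hαne, Real.zero_rpow hβne]
        · have e1 : (T⁻¹ * aa j ^ α) ^ β = T ^ (-β) * aa j ^ (α * β) := by
            rw [Real.mul_rpow (inv_nonneg.mpr hT0) (Real.rpow_nonneg (ha j) α),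
                Real.inv_rpow hT0, ← Real.rpow_neg hT0, ← Real.rpow_mul (ha j)]
          rw [e1]
          have e2 : α * β = α - 1 := by rw [hβ]; field_simp
          rw [e2, mul_assoc]
          congr 1
          nth_rewrite 2 [show aa j = aa j ^ (1:ℝ) from (Real.rpow_one _).symm]
          rw [← Real.rpow_add hpos]
          congr 1
          ring
      have hpow : T ^ (-β) * T = T ^ α⁻¹ := by
        nth_rewrite 2 [show T = T ^ (1:ℝ) from (Real.rpow_one T).symm]
        rw [← Real.rpow_add hTpos]
        congr 1
        rw [hβ]
        field_simp
        ring
      have h5 : (mpow (V * diagonal (fun j => ((T⁻¹ * aa j ^ α : ℝ) : ℂ)) * star V) β * A).trace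
          = ((T ^ α⁻¹ : ℝ) : ℂ) := by
        rw [mpow_eq hτh, cfc_of_decomp hτh V (fun j => T⁻¹ * aa j ^ α) hV hV' rfl,
          trace_conj_diag_mul, hdiagA]
        simp only [Matrix.diagonal_apply_eq]
        rw [show (∑ j, (((T⁻¹ * aa j ^ α) ^ β : ℝ) : ℂ) * ((aa j : ℝ) : ℂ))
            = ((∑ j, (T⁻¹ * aa j ^ α) ^ β * aa j : ℝ) : ℂ) from by push_cast; rfl]
        rw [Finset.sum_congr rfl (fun j _ => hterm j), ← Finset.mul_sum, ← hTdef, hpow]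
      refine ⟨_, hτpsd, ?_, ?_⟩
      · rw [trace_conj_diag V _ hV]
        rw [show (∑ j, ((T⁻¹ * aa j ^ α : ℝ) : ℂ))
            = ((∑ j, T⁻¹ * aa j ^ α : ℝ) : ℂ) from by push_cast; rfl]
        rw [← Finset.mul_sum, ← hTdef, inv_mul_cancel₀ (ne_of_gt hTpos)]
        norm_num
      · rw [h5, Complex.ofReal_re, hre1]


end
end

section
/- The coherence measure C*(ρ) := min over incoherent states σ of D(σ‖ρ) is additive under tensor products: C*(ρ₁ ⊗ ρ₂) = C*(ρ₁) + C*(ρ₂) for full-rank density matrices ρ₁, ρ₂. -/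
open Matrix
open scoped Kronecker ComplexOrder

noncomputable section

set_option linter.unusedSectionVars false

section aux

open Polynomial

variable {n : Type*} [Fintype n] [DecidableEq n]

/-- Conjugation by a unitary as an `ℝ`-algebra hom. -/
def conjAH (U : Matrix n n ℂ) (h1 : U * star U = 1) (h2 : star U * U = 1) :
    Matrix n n ℂ →ₐ[ℝ] Matrix n n ℂ where
  toFun X := U * X * star U
  map_one' := by show U * 1 * star U = 1; rw [mul_one, h1]
  map_mul' X Y := by
    show U * (X * Y) * star U = (U * X * star U) * (U * Y * star U)
    calc U * (X * Y) * star U = U * X * (star U * U) * Y * star U := by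
          rw [h2, mul_one]; simp only [Matrix.mul_assoc]
      _ = (U * X * star U) * (U * Y * star U) := by
          simp only [Matrix.mul_assoc]
  map_zero' := by show U * 0 * star U = 0; simp
  map_add' X Y := by show U * (X + Y) * star U = _; rw [Matrix.mul_add, Matrix.add_mul]
  commutes' r := by
    show U * algebraMap ℝ (Matrix n n ℂ) r * star U = algebraMap ℝ (Matrix n n ℂ) r
    simp only [Algebra.algebraMap_eq_smul_one]
    rw [mul_smul_comm, mul_one, smul_mul_assoc, h1]

lemma aeval_conj (U : Matrix n n ℂ) (h1 : U * star U = 1) (h2 : star U * U = 1)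
    (X : Matrix n n ℂ) (p : ℝ[X]) :
    aeval (U * X * star U) p = U * aeval X p * star U :=
  aeval_algHom_apply (conjAH U h1 h2) X p

lemma aeval_diagonal (d : n → ℂ) (p : ℝ[X]) :
    aeval (diagonal d) p = diagonal (fun i => aeval (d i) p) := by
  have h := aeval_algHom_apply (Matrix.diagonalAlgHom (n := n) (α := ℂ) ℝ) d p
  simp only [Matrix.diagonalAlgHom_apply] at h
  have h2 : (aeval d p : n → ℂ) = fun i => aeval (d i) p :=
    funext fun i => (aeval_algHom_apply (Pi.evalAlgHom ℝ (fun _ => ℂ) i) d p).symm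
  rw [h, h2]

lemma aeval_ofReal (x : ℝ) (p : ℝ[X]) :
    aeval ((x : ℂ)) p = ((p.eval x : ℝ) : ℂ) := by
  simpa using aeval_algebraMap_apply_eq_algebraMap_eval (A := ℂ) x p

/-- Key well-definedness lemma for `hermCFC` at conjugated real diagonal matrices. -/
lemma hermCFC_conj_diagonal (U : Matrix n n ℂ) (h1 : U * star U = 1) (h2 : star U * U = 1)
    (d : n → ℝ) (f : ℝ → ℝ) :
    hermCFC (U * diagonal (fun i => (d i : ℂ)) * star U) f
      = U * diagonal (fun i => ((f (d i) : ℝ) : ℂ)) * star U := by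
  set A := U * diagonal (fun i => (d i : ℂ)) * star U with hAdef
  have hdiagH : (diagonal (fun i => (d i : ℂ))).IsHermitian := by
    apply isHermitian_diagonal_of_self_adjoint
    funext i
    simp [RCLike.star_def, Complex.conj_ofReal]
  have hA : A.IsHermitian := by
    rw [hAdef]
    unfold IsHermitian
    rw [conjTranspose_mul, conjTranspose_mul, hdiagH.eq]
    simp [Matrix.mul_assoc, Matrix.star_eq_conjTranspose]
  rw [hermCFC, dif_pos hA]
  unfold Matrix.IsHermitian.cfc
  set V := (hA.eigenvectorUnitary : Matrix n n ℂ) with hV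
  have hV1 : V * star V = 1 := Matrix.mem_unitaryGroup_iff.mp hA.eigenvectorUnitary.2
  have hV2 : star V * V = 1 := Matrix.mem_unitaryGroup_iff'.mp hA.eigenvectorUnitary.2
  set s : Finset ℝ := (Finset.univ.image d) ∪ (Finset.univ.image hA.eigenvalues) with hs
  set p : ℝ[X] := Lagrange.interpolate s id f with hp
  have hpe : ∀ x ∈ s, p.eval x = f x := by
    intro x hx
    exact Lagrange.eval_interpolate_at_node f (Set.injOn_id _) hx
  have key : ∀ (W : Matrix n n ℂ), W * star W = 1 → star W * W = 1 →
      ∀ e : n → ℝ, (∀ i, e i ∈ s) →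
      aeval (W * diagonal (fun i => ((e i : ℝ) : ℂ)) * star W) p
        = W * diagonal (fun i => ((f (e i) : ℝ) : ℂ)) * star W := by
    intro W hW1 hW2 e he
    have hv : ∀ i : n, aeval ((e i : ℂ)) p = ((f (e i) : ℝ) : ℂ) := fun i => by
      rw [_root_.aeval_ofReal, hpe _ (he i)]
    rw [aeval_conj W hW1 hW2, aeval_diagonal]
    simp only [hv]
  have hd : ∀ i, d i ∈ s := fun i => Finset.mem_union_left _ (Finset.mem_image_of_mem d (Finset.mem_univ i))
  have hev : ∀ i, hA.eigenvalues i ∈ s := fun i =>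
    Finset.mem_union_right _ (Finset.mem_image_of_mem _ (Finset.mem_univ i))
  have e1 : aeval A p = U * diagonal (fun i => ((f (d i) : ℝ) : ℂ)) * star U := by
    rw [hAdef]; exact key U h1 h2 d hd
  have e2 : aeval A p = V * diagonal (fun i => ((f (hA.eigenvalues i) : ℝ) : ℂ)) * star V := by
    conv_lhs => rw [hA.spectral_theorem]
    exact key V hV1 hV2 hA.eigenvalues hev
  rw [← e1, e2]
  rfl

lemma hermCFC_diagonal (d : n → ℝ) (f : ℝ → ℝ) :
    hermCFC (diagonal (fun i => ((d i : ℝ) : ℂ))) f = diagonal (fun i => ((f (d i) : ℝ) : ℂ)) := by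
  have h := hermCFC_conj_diagonal (1 : Matrix n n ℂ) (by simp) (by simp) d f
  simpa using h

variable {m : Type*} [Fintype m] [DecidableEq m]

lemma star_kron (A : Matrix m m ℂ) (B : Matrix n n ℂ) :
    star (A ⊗ₖ B) = star A ⊗ₖ star B := by
  ext ⟨i, j⟩ ⟨k, l⟩
  simp [Matrix.star_eq_conjTranspose, Matrix.conjTranspose_apply, Matrix.kroneckerMap_apply,
    mul_comm]

lemma mlog_conj_diagonal (U : Matrix n n ℂ) (h1 : U * star U = 1) (h2 : star U * U = 1)
    (d : n → ℝ) :
    mlog (U * diagonal (fun i => ((d i : ℝ) : ℂ)) * star U)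
      = U * diagonal (fun i => ((Real.log (d i) : ℝ) : ℂ)) * star U :=
  hermCFC_conj_diagonal U h1 h2 d Real.log

lemma mlog_kron (ρ₁ : Matrix m m ℂ) (ρ₂ : Matrix n n ℂ) (h₁ : ρ₁.PosDef) (h₂ : ρ₂.PosDef) :
    mlog (ρ₁ ⊗ₖ ρ₂) = (mlog ρ₁) ⊗ₖ (1 : Matrix n n ℂ) + (1 : Matrix m m ℂ) ⊗ₖ (mlog ρ₂) := by
  have hH₁ := h₁.1
  have hH₂ := h₂.1
  set U₁ := (hH₁.eigenvectorUnitary : Matrix m m ℂ) with hU₁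
  set U₂ := (hH₂.eigenvectorUnitary : Matrix n n ℂ) with hU₂
  set l₁ := hH₁.eigenvalues
  set l₂ := hH₂.eigenvalues
  have hU₁1 : U₁ * star U₁ = 1 := Matrix.mem_unitaryGroup_iff.mp hH₁.eigenvectorUnitary.2
  have hU₁2 : star U₁ * U₁ = 1 := Matrix.mem_unitaryGroup_iff'.mp hH₁.eigenvectorUnitary.2
  have hU₂1 : U₂ * star U₂ = 1 := Matrix.mem_unitaryGroup_iff.mp hH₂.eigenvectorUnitary.2
  have hU₂2 : star U₂ * U₂ = 1 := Matrix.mem_unitaryGroup_iff'.mp hH₂.eigenvectorUnitary.2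
  have hs₁ : ρ₁ = U₁ * diagonal (fun i => ((l₁ i : ℝ) : ℂ)) * star U₁ := hH₁.spectral_theorem
  have hs₂ : ρ₂ = U₂ * diagonal (fun i => ((l₂ i : ℝ) : ℂ)) * star U₂ := hH₂.spectral_theorem
  set U := U₁ ⊗ₖ U₂ with hU
  have hsU : star U = star U₁ ⊗ₖ star U₂ := star_kron U₁ U₂
  have hU1 : U * star U = 1 := by
    rw [hU, hsU, ← Matrix.mul_kronecker_mul, hU₁1, hU₂1, Matrix.one_kronecker_one]
  have hU2 : star U * U = 1 := by
    rw [hU, hsU, ← Matrix.mul_kronecker_mul, hU₁2, hU₂2, Matrix.one_kronecker_one]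
  have hkron : ρ₁ ⊗ₖ ρ₂ = U * diagonal (fun p : m × n => ((l₁ p.1 * l₂ p.2 : ℝ) : ℂ)) * star U := by
    conv_lhs => rw [hs₁, hs₂]
    rw [Matrix.mul_kronecker_mul, Matrix.mul_kronecker_mul, Matrix.diagonal_kronecker_diagonal,
      hU, hsU]
    congr 2
    funext p
    push_cast
    ring
  have hlp : ∀ i : m, l₁ i ≠ 0 := fun i => ne_of_gt (h₁.eigenvalues_pos i)
  have hlq : ∀ j : n, l₂ j ≠ 0 := fun j => ne_of_gt (h₂.eigenvalues_pos j)
  have hml₁ : mlog ρ₁ = U₁ * diagonal (fun i => ((Real.log (l₁ i) : ℝ) : ℂ)) * star U₁ := by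
    conv_lhs => rw [hs₁]
    exact mlog_conj_diagonal U₁ hU₁1 hU₁2 l₁
  have hml₂ : mlog ρ₂ = U₂ * diagonal (fun j => ((Real.log (l₂ j) : ℝ) : ℂ)) * star U₂ := by
    conv_lhs => rw [hs₂]
    exact mlog_conj_diagonal U₂ hU₂1 hU₂2 l₂
  rw [hkron, mlog_conj_diagonal U hU1 hU2]
  have hdiag : (diagonal (fun p : m × n => ((Real.log (l₁ p.1 * l₂ p.2) : ℝ) : ℂ)))
      = (diagonal (fun i => ((Real.log (l₁ i) : ℝ) : ℂ))) ⊗ₖ (1 : Matrix n n ℂ)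
        + (1 : Matrix m m ℂ) ⊗ₖ (diagonal (fun j => ((Real.log (l₂ j) : ℝ) : ℂ))) := by
    rw [← Matrix.diagonal_one, ← Matrix.diagonal_one, Matrix.diagonal_kronecker_diagonal,
      Matrix.diagonal_kronecker_diagonal, Matrix.diagonal_add]
    refine congrArg Matrix.diagonal (funext fun p => ?_)
    rw [Real.log_mul (hlp p.1) (hlq p.2)]
    push_cast
    ring
  rw [hdiag, Matrix.mul_add, Matrix.add_mul, hU, hsU,
    ← Matrix.mul_kronecker_mul, ← Matrix.mul_kronecker_mul,
    ← Matrix.mul_kronecker_mul, ← Matrix.mul_kronecker_mul, hml₁, hml₂]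
  simp only [Matrix.mul_one, hU₁1, hU₂1]

lemma tVal_kron (ρ₁ : Matrix m m ℂ) (ρ₂ : Matrix n n ℂ) (h₁ : ρ₁.PosDef) (h₂ : ρ₂.PosDef) :
    tVal (ρ₁ ⊗ₖ ρ₂) = tVal ρ₁ * tVal ρ₂ := by
  unfold tVal
  rw [mlog_kron ρ₁ ρ₂ h₁ h₂, Fintype.sum_prod_type]
  simp only [Matrix.add_apply, Matrix.kroneckerMap_apply, Matrix.one_apply_eq, mul_one, one_mul,
    Complex.add_re, Real.exp_add]
  rw [← Finset.sum_mul_sum]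

lemma gibbs_pt {q p : ℝ} (hq : 0 ≤ q) (hp : 0 < p) :
    q - p ≤ q * Real.log q - q * Real.log p := by
  rcases eq_or_lt_of_le hq with h | h
  · simp [← h]; linarith
  · have hl := Real.log_le_sub_one_of_pos (div_pos hp h)
    rw [Real.log_div (ne_of_gt hp) (ne_of_gt h)] at hl
    have h2 := mul_le_mul_of_nonneg_left hl h.le
    have h3 : q * (p / q) = p := by field_simp
    nlinarith [h2, h3]

lemma gibbs {n : Type*} [Fintype n] (q a : n → ℝ) (hq : ∀ i, 0 ≤ q i) (hs : ∑ i, q i = 1) :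
    -Real.log (∑ i, Real.exp (a i)) ≤ ∑ i, (q i * Real.log (q i) - q i * a i) := by
  have hn : Nonempty n := by
    by_contra h
    rw [not_nonempty_iff] at h
    rw [Finset.univ_eq_empty, Finset.sum_empty] at hs
    norm_num at hs
  set Z := ∑ i, Real.exp (a i) with hZdef
  have hZ : 0 < Z := Finset.sum_pos (fun i _ => Real.exp_pos _) Finset.univ_nonempty
  have key : ∀ i, q i - Real.exp (a i) / Z ≤ q i * Real.log (q i) - q i * (a i - Real.log Z) := by
    intro i
    have h := gibbs_pt (hq i) (div_pos (Real.exp_pos (a i)) hZ)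
    rwa [Real.log_div (Real.exp_ne_zero _) (ne_of_gt hZ), Real.log_exp] at h
  have hsum := Finset.sum_le_sum (fun i (_ : i ∈ Finset.univ) => key i)
  have h1 : ∑ i, (q i - Real.exp (a i) / Z) = 0 := by
    rw [Finset.sum_sub_distrib, hs, ← Finset.sum_div, ← hZdef]
    field_simp
    norm_num
  have h2 : ∑ i, (q i * Real.log (q i) - q i * (a i - Real.log Z))
      = (∑ i, (q i * Real.log (q i) - q i * a i)) + Real.log Z := by
    have he : ∀ i, q i * Real.log (q i) - q i * (a i - Real.log Z)
        = (q i * Real.log (q i) - q i * a i) + Real.log Z * q i := fun i => by ring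
    rw [Finset.sum_congr rfl (fun i _ => he i), Finset.sum_add_distrib, ← Finset.mul_sum, hs,
      mul_one]
  rw [h1, h2] at hsum
  linarith

lemma qRelEntropy_diagonal (q : n → ℝ) (ρ : Matrix n n ℂ) :
    qRelEntropy (diagonal (fun i => ((q i : ℝ) : ℂ))) ρ
      = ∑ i, (q i * Real.log (q i) - q i * (mlog ρ i i).re) := by
  have hml : mlog (diagonal fun i => ((q i : ℝ) : ℂ)) = diagonal (fun i => ((Real.log (q i) : ℝ) : ℂ)) :=
    hermCFC_diagonal q Real.log
  unfold qRelEntropy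
  rw [hml, Matrix.trace, Complex.re_sum]
  apply Finset.sum_congr rfl
  intro i _
  rw [Matrix.diag]
  rw [Matrix.diagonal_mul, Matrix.sub_apply, Matrix.diagonal_apply_eq]
  simp [Complex.mul_re, Complex.sub_re, Complex.sub_im]
  ring

lemma qRelEntropy_key {n : Type*} [Fintype n] [DecidableEq n] [Nonempty n] (ρ : Matrix n n ℂ) :
    sInf {x : ℝ | ∃ σ : Matrix n n ℂ, IsIncoherent σ ∧ x = qRelEntropy σ ρ}
      = -Real.log (tVal ρ) := by
  set a : n → ℝ := fun i => (mlog ρ i i).re with ha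
  have hZdef : tVal ρ = ∑ i, Real.exp (a i) := rfl
  have hZ : 0 < tVal ρ := by
    rw [hZdef]; exact Finset.sum_pos (fun i _ => Real.exp_pos _) Finset.univ_nonempty
  have hdiag : ∀ σ : Matrix n n ℂ, IsIncoherent σ →
      σ = diagonal (fun i => (((σ i i).re : ℝ) : ℂ)) ∧ (∀ i, 0 ≤ (σ i i).re) ∧
        (∑ i, (σ i i).re) = 1 := by
    intro σ hσ
    obtain ⟨⟨hpsd, htr⟩, hoff⟩ := hσ
    have hentry : ∀ i, 0 ≤ σ i i := by
      intro i
      have h := hpsd.diag_nonneg (i := i)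
      simpa [dotProduct, Pi.single_apply, apply_ite (star : ℂ → ℂ),
        Finset.sum_ite_eq'] using h
    have hre : ∀ i, σ i i = (((σ i i).re : ℝ) : ℂ) := by
      intro i
      obtain ⟨h1, h2⟩ := Complex.nonneg_iff.mp (hentry i)
      exact Complex.ext rfl h2.symm
    refine ⟨?_, fun i => (Complex.nonneg_iff.mp (hentry i)).1, ?_⟩
    · ext i j
      rcases eq_or_ne i j with rfl | hij
      · rw [Matrix.diagonal_apply_eq]; exact hre i
      · rw [Matrix.diagonal_apply_ne _ hij]; exact hoff i j hij
    · have := congrArg Complex.re htr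
      rwa [Matrix.trace, Complex.re_sum, Complex.one_re] at this
  have hlb : ∀ x ∈ {x : ℝ | ∃ σ : Matrix n n ℂ, IsIncoherent σ ∧ x = qRelEntropy σ ρ},
      -Real.log (tVal ρ) ≤ x := by
    rintro x ⟨σ, hσ, rfl⟩
    obtain ⟨hrep, hnn, hsum⟩ := hdiag σ hσ
    rw [hZdef]
    calc -Real.log (∑ i, Real.exp (a i))
        ≤ ∑ i, ((σ i i).re * Real.log ((σ i i).re) - (σ i i).re * a i) :=
          gibbs _ a hnn hsum
      _ = qRelEntropy σ ρ := by
          conv_rhs => rw [hrep]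
          rw [qRelEntropy_diagonal]
  set q0 : n → ℝ := fun i => Real.exp (a i) / tVal ρ with hq0
  have hq0nn : ∀ i, 0 ≤ q0 i := fun i => div_nonneg (Real.exp_pos _).le hZ.le
  have hq0sum : ∑ i, q0 i = 1 := by
    rw [hq0]
    rw [← Finset.sum_div, ← hZdef, div_self (ne_of_gt hZ)]
  have hq0log : ∀ i, Real.log (q0 i) = a i - Real.log (tVal ρ) := by
    intro i
    rw [hq0]
    rw [Real.log_div (Real.exp_ne_zero _) (ne_of_gt hZ), Real.log_exp]
  have hmem : -Real.log (tVal ρ) ∈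
      {x : ℝ | ∃ σ : Matrix n n ℂ, IsIncoherent σ ∧ x = qRelEntropy σ ρ} := by
    refine ⟨diagonal (fun i => ((q0 i : ℝ) : ℂ)), ⟨⟨?_, ?_⟩, ?_⟩, ?_⟩
    · exact Matrix.PosSemidef.diagonal (fun i => Complex.zero_le_real.mpr (hq0nn i))
    · rw [Matrix.trace_diagonal]
      rw [← Complex.ofReal_sum, hq0sum, Complex.ofReal_one]
    · intro i j hij
      exact Matrix.diagonal_apply_ne _ hij
    · rw [qRelEntropy_diagonal]
      have he : ∀ i, q0 i * Real.log (q0 i) - q0 i * a i = -Real.log (tVal ρ) * q0 i := by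
        intro i
        rw [hq0log i]
        ring
      rw [Finset.sum_congr rfl (fun i _ => he i), ← Finset.mul_sum, hq0sum, mul_one]
  apply le_antisymm
  · exact csInf_le ⟨-Real.log (tVal ρ), fun x hx => hlb x hx⟩ hmem
  · exact le_csInf ⟨_, hmem⟩ hlb


end aux

/-- Additivity of the coherence measure `C*(ρ) = min_{σ incoherent} D(σ‖ρ)`
under tensor products, for full-rank density matrices. -/
theorem stmt8 {d₁ d₂ : ℕ}
    (ρ₁ : Matrix (Fin d₁) (Fin d₁) ℂ) (ρ₂ : Matrix (Fin d₂) (Fin d₂) ℂ)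
    (h₁ : ρ₁.PosDef) (h₁t : ρ₁.trace = 1) (h₂ : ρ₂.PosDef) (h₂t : ρ₂.trace = 1) :
    sInf {x : ℝ | ∃ σ : Matrix (Fin d₁ × Fin d₂) (Fin d₁ × Fin d₂) ℂ,
        IsIncoherent σ ∧ x = qRelEntropy σ (ρ₁ ⊗ₖ ρ₂)} =
      sInf {x : ℝ | ∃ σ : Matrix (Fin d₁) (Fin d₁) ℂ, IsIncoherent σ ∧ x = qRelEntropy σ ρ₁} +
      sInf {x : ℝ | ∃ σ : Matrix (Fin d₂) (Fin d₂) ℂ, IsIncoherent σ ∧ x = qRelEntropy σ ρ₂} := by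
  have hd₁ : 0 < d₁ := by
    rcases Nat.eq_zero_or_pos d₁ with h | h
    · subst h
      rw [Matrix.trace] at h₁t
      simp at h₁t
    · exact h
  have hd₂ : 0 < d₂ := by
    rcases Nat.eq_zero_or_pos d₂ with h | h
    · subst h
      rw [Matrix.trace] at h₂t
      simp at h₂t
    · exact h
  haveI : Nonempty (Fin d₁) := Fin.pos_iff_nonempty.mp hd₁
  haveI : Nonempty (Fin d₂) := Fin.pos_iff_nonempty.mp hd₂
  have hZ₁ : 0 < tVal ρ₁ := Finset.sum_pos (fun i _ => Real.exp_pos _) Finset.univ_nonempty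
  have hZ₂ : 0 < tVal ρ₂ := Finset.sum_pos (fun i _ => Real.exp_pos _) Finset.univ_nonempty
  rw [qRelEntropy_key (ρ₁ ⊗ₖ ρ₂), qRelEntropy_key ρ₁, qRelEntropy_key ρ₂,
    tVal_kron ρ₁ ρ₂ h₁ h₂, Real.log_mul (ne_of_gt hZ₁) (ne_of_gt hZ₂)]
  ring


end
end
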